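/- For all integers k, ℓ ≥ 1, the toroidal triangular lattice Δ_{10k,10ℓ} contains a parallel K₂-quasiperfect dominating set having exactly 10kℓ components (hence of cardinality 20kℓ). -/

import Mathlib

open SimpleGraph Set

def triDirs : Set (ℤ × ℤ) := {(1,0), (-1,0), (0,1), (0,-1), (1,-1), (-1,1)}

def triLattice : SimpleGraph (ℤ × ℤ) :=
  SimpleGraph.fromRel (fun u v => u - v ∈ triDirs)

def torLattice (m n : ℕ) : SimpleGraph (ZMod m × ZMod n) :=
  SimpleGraph.fromRel (fun u v =>
    ∃ d ∈ triDirs, u - v = ((d.1 : ZMod m), (d.2 : ZMod n)))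

def IsPDS {V : Type*} (G : SimpleGraph V) (S : Set V) : Prop :=
  ∀ v ∉ S, ∃! u, u ∈ S ∧ G.Adj v u

def IsSPDS {V : Type*} (G : SimpleGraph V) (S : Set V) : Prop :=
  ∀ v ∉ S, {u | u ∈ S ∧ G.Adj v u}.ncard = 2

def IsQPDS {V : Type*} (G : SimpleGraph V) (S : Set V) : Prop :=
  ∀ v ∉ S, {u | u ∈ S ∧ G.Adj v u}.ncard = 1 ∨ {u | u ∈ S ∧ G.Adj v u}.ncard = 2

def IsK2QPDS {V : Type*} (G : SimpleGraph V) (S : Set V) : Prop :=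
  IsQPDS G S ∧ ∀ v ∈ S, {u | u ∈ S ∧ G.Adj v u}.ncard = 1

def IsK3QPDS {V : Type*} (G : SimpleGraph V) (S : Set V) : Prop :=
  IsQPDS G S ∧ ∀ v ∈ S, ∃ a b, a ≠ b ∧ G.Adj a b ∧ {u | u ∈ S ∧ G.Adj v u} = {a, b}

def IsIndep {V : Type*} (G : SimpleGraph V) (S : Set V) : Prop :=
  ∀ a ∈ S, ∀ b ∈ S, ¬ G.Adj a b

/-- Representative directions for the three types of `K₂`-components:
type 1 is `±(0,1)`, type 2 is `±(1,0)`, type 3 is `±(1,-1)`. -/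
def typeDirs : Set (ℤ × ℤ) := {(0,1), (1,0), (1,-1)}

/-- A `K₂`-QPDS of the toroidal lattice is parallel when all its components
have the same type. -/
def TorIsParallel (m n : ℕ) (S : Set (ZMod m × ZMod n)) : Prop :=
  ∃ d ∈ typeDirs, ∀ a ∈ S, ∀ b ∈ S, (torLattice m n).Adj a b →
    (b - a = ((d.1 : ZMod m), (d.2 : ZMod n)) ∨
     b - a = -((d.1 : ZMod m), (d.2 : ZMod n)))

/-!
Label the vertex `(x, y)` of the torus by `x + 4y ∈ ℤ/10`; this is well defined since `10` divides
both side lengths, and the six lattice directions `±(1,0)`, `±(0,1)`, `±(1,-1)` shift the label by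
`±1`, `±4`, `∓3`. Take `S` to be the vertices labelled `0` or `1`. Once the sides are at least `3`
the six neighbours of a vertex are distinct, so how many of them lie in `S` depends only on the
label, and a check in `ℤ/10` shows: a vertex of `S` has exactly one `S`-neighbour, its horizontal
one, and any other vertex has one or two. So `S` is a parallel `K₂`-QPDS. It is the union of two
fibres of the label map, each of size `mn/10`, and its components are pairs, hence `mn/10` of them.
-/

theorem AddMonoidHom.card_preimage_of_surjective {G H : Type*} [AddGroup G] [AddGroup H]
    (f : G →+ H) (hf : Function.Surjective f) (t : Set H) :
    Nat.card (f ⁻¹' t) = Nat.card f.ker * Nat.card t := by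
  let e := QuotientAddGroup.quotientKerEquivOfSurjective f hf
  have hpre : f ⁻¹' t = QuotientAddGroup.mk ⁻¹' (e ⁻¹' t) := rfl
  rw [hpre, Nat.card_congr (QuotientAddGroup.preimageMkEquivAddSubgroupProdSet _ _),
    Nat.card_prod, Nat.card_preimage_of_injective e.injective (by simp)]

theorem SimpleGraph.reachable_iff_eq_or_adj_of_existsUnique_adj {W : Type*} {H : SimpleGraph W}
    (h : ∀ v, ∃! u, H.Adj v u) {v u : W} : H.Reachable v u ↔ v = u ∨ H.Adj v u := by
  constructor
  · rintro ⟨w⟩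
    induction w with
    | nil => exact .inl rfl
    | cons hvb _ ih =>
      rcases ih with rfl | hbu
      · exact .inr hvb
      · exact .inl ((h _).unique hvb.symm hbu)
  · rintro (rfl | hvu)
    exacts [Reachable.refl v, hvu.reachable]

theorem SimpleGraph.two_mul_card_connectedComponent_of_existsUnique_adj {W : Type*} [Finite W]
    {H : SimpleGraph W} (h : ∀ v, ∃! u, H.Adj v u) :
    2 * Nat.card H.ConnectedComponent = Nat.card W := by
  have hfiber (C : H.ConnectedComponent) : Nat.card {v // H.connectedComponentMk v = C} = 2 := by
    induction C using ConnectedComponent.ind with | h v => ?_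
    obtain ⟨u, hvu, hu⟩ := h v
    have hC : {w | H.connectedComponentMk w = H.connectedComponentMk v} = {v, u} := by
      ext w
      rw [Set.mem_ofPred_eq, ConnectedComponent.eq, reachable_comm,
        reachable_iff_eq_or_adj_of_existsUnique_adj h]
      exact or_congr eq_comm ⟨hu w, fun hwu => hwu ▸ hvu⟩
    rw [← Set.ncard_pair hvu.ne, ← hC, ← Nat.card_coe_set_eq]; rfl
  have : Fintype H.ConnectedComponent := Fintype.ofFinite _
  calc 2 * Nat.card H.ConnectedComponent = ∑ C : H.ConnectedComponent, 2 := by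
        simp [mul_comm]
    _ = Nat.card W := by
        rw [← Nat.card_congr (Equiv.sigmaFiberEquiv H.connectedComponentMk), Nat.card_sigma]
        simp only [hfiber]

theorem SimpleGraph.two_mul_card_connectedComponent_induce {V : Type*} {G : SimpleGraph V}
    {S : Set V} [Finite S] (h : ∀ v ∈ S, {u | u ∈ S ∧ G.Adj v u}.ncard = 1) :
    2 * Nat.card (G.induce S).ConnectedComponent = S.ncard := by
  rw [← Nat.card_coe_set_eq]
  refine two_mul_card_connectedComponent_of_existsUnique_adj fun v => ?_
  obtain ⟨a, ha⟩ := Set.ncard_eq_one.mp (h v v.2)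
  have hmem (u : V) : u ∈ S ∧ G.Adj v u ↔ u = a := Set.ext_iff.mp ha u
  obtain ⟨haS, hva⟩ := (hmem a).mpr rfl
  exact ⟨⟨a, haS⟩, hva, fun u hu => Subtype.ext ((hmem u).mp ⟨u.2, hu⟩)⟩

section Torus

variable {m n : ℕ}

def torVec (m n : ℕ) (d : ℤ × ℤ) : ZMod m × ZMod n := ((d.1 : ZMod m), (d.2 : ZMod n))

def triDirFinset : Finset (ℤ × ℤ) := {(1,0), (-1,0), (0,1), (0,-1), (1,-1), (-1,1)}

theorem coe_triDirFinset : (triDirFinset : Set (ℤ × ℤ)) = triDirs := by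
  simp [triDirFinset, triDirs]

theorem neg_mem_triDirs {d : ℤ × ℤ} (hd : d ∈ triDirs) : -d ∈ triDirs := by
  rw [← coe_triDirFinset, Finset.mem_coe] at hd ⊢
  revert d
  decide

theorem torLattice_adj_iff (u v : ZMod m × ZMod n) :
    (torLattice m n).Adj u v ↔ u ≠ v ∧ ∃ d ∈ triDirs, v = u + torVec m n d := by
  simp only [torLattice, fromRel_adj]
  refine and_congr_right fun _ => ⟨?_, ?_⟩
  · rintro (⟨d, hd, huv⟩ | ⟨d, hd, hvu⟩)
    · refine ⟨-d, neg_mem_triDirs hd, ?_⟩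
      rw [show torVec m n (-d) = -(u - v) by simp [huv, torVec]]
      abel
    · exact ⟨d, hd, eq_add_of_sub_eq' hvu⟩
  · rintro ⟨d, hd, rfl⟩
    exact .inr ⟨d, hd, add_sub_cancel_left u _⟩

theorem ZMod.intCast_injOn_Icc (hm : 3 ≤ m) : Set.InjOn (Int.cast : ℤ → ZMod m) (Icc (-1) 1) := by
  intro x hx y hy hxy
  rw [ZMod.intCast_eq_intCast_iff_dvd_sub] at hxy
  have := Int.eq_zero_of_abs_lt_dvd hxy (by rw [abs_lt]; simp only [mem_Icc] at hx hy; omega)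
  omega

theorem torVec_injOn (hm : 3 ≤ m) (hn : 3 ≤ n) : Set.InjOn (torVec m n) (insert 0 triDirs) := by
  have hbox : ∀ d ∈ insert (0 : ℤ × ℤ) triDirs, d.1 ∈ Icc (-1) 1 ∧ d.2 ∈ Icc (-1) 1 := by
    simp [triDirs]
  intro d hd e he hde
  exact Prod.ext (ZMod.intCast_injOn_Icc hm (hbox d hd).1 (hbox e he).1 (congrArg Prod.fst hde))
    (ZMod.intCast_injOn_Icc hn (hbox d hd).2 (hbox e he).2 (congrArg Prod.snd hde))

theorem ncard_inter_torLattice_adj (hm : 3 ≤ m) (hn : 3 ≤ n) (S : Set (ZMod m × ZMod n))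
    (v : ZMod m × ZMod n) :
    {u | u ∈ S ∧ (torLattice m n).Adj v u}.ncard
      = {d ∈ triDirs | v + torVec m n d ∈ S}.ncard := by
  have himage : {u | u ∈ S ∧ (torLattice m n).Adj v u}
      = (v + torVec m n ·) '' {d ∈ triDirs | v + torVec m n d ∈ S} := by
    ext u
    simp only [mem_ofPred_eq, torLattice_adj_iff, mem_image]
    constructor
    · rintro ⟨huS, -, d, hd, rfl⟩
      exact ⟨d, ⟨hd, huS⟩, rfl⟩
    · rintro ⟨d, ⟨hd, hdS⟩, rfl⟩
      refine ⟨hdS, fun hvd => ?_, d, hd, rfl⟩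
      have hd0 : d = 0 := torVec_injOn hm hn (mem_insert_of_mem _ hd) (mem_insert 0 _)
        (by simpa [torVec] using hvd)
      exact absurd (hd0 ▸ hd) (by simp [triDirs, Prod.ext_iff])
  rw [himage]
  exact InjOn.ncard_image fun d hd e he hde =>
    torVec_injOn hm hn (mem_insert_of_mem _ hd.1) (mem_insert_of_mem _ he.1) (add_left_cancel hde)

end Torus

section DominoPattern

variable {m n : ℕ} (hm : 10 ∣ m) (hn : 10 ∣ n)

def dirLabel (d : ℤ × ℤ) : ZMod 10 := d.1 + 4 * d.2

def torLabel : ZMod m × ZMod n →+ ZMod 10 :=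
  (ZMod.castHom hm (ZMod 10)).toAddMonoidHom.coprod
    (4 • (ZMod.castHom hn (ZMod 10)).toAddMonoidHom)

theorem torLabel_torVec (d : ℤ × ℤ) : torLabel hm hn (torVec m n d) = dirLabel d := by
  simp [torLabel, torVec, dirLabel]

theorem torLabel_surjective : Function.Surjective (torLabel hm hn) := fun t =>
  ⟨torVec m n (t.val, 0), by simp [torLabel_torVec, dirLabel]⟩

def dominoPattern : Set (ZMod m × ZMod n) := torLabel hm hn ⁻¹' {0, 1}

theorem five_mul_ncard_dominoPattern : 5 * (dominoPattern hm hn).ncard = m * n := by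
  have hS := (torLabel hm hn).card_preimage_of_surjective (torLabel_surjective hm hn) {0, 1}
  have hG := (torLabel hm hn).card_preimage_of_surjective (torLabel_surjective hm hn) univ
  rw [Nat.card_coe_set_eq ({0, 1} : Set (ZMod 10)), ncard_pair (by decide)] at hS
  rw [preimage_univ, Nat.card_univ, Nat.card_univ, Nat.card_prod, Nat.card_zmod, Nat.card_zmod,
    Nat.card_zmod] at hG
  rw [dominoPattern, ← Nat.card_coe_set_eq, hS, hG]
  ring

def dirsIntoPattern (s : ZMod 10) : Finset (ℤ × ℤ) :=
  triDirFinset.filter fun d => s + dirLabel d = 0 ∨ s + dirLabel d = 1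

theorem dirsIntoPattern_of_mem : ∀ s : ZMod 10, s = 0 ∨ s = 1 →
    dirsIntoPattern s = {(1, 0)} ∨ dirsIntoPattern s = {(-1, 0)} := by
  decide

theorem card_dirsIntoPattern_of_not_mem : ∀ s : ZMod 10, ¬(s = 0 ∨ s = 1) →
    (dirsIntoPattern s).card = 1 ∨ (dirsIntoPattern s).card = 2 := by
  decide

theorem sep_triDirs_add_mem_dominoPattern (v : ZMod m × ZMod n) :
    {d ∈ triDirs | v + torVec m n d ∈ dominoPattern hm hn}
      = ↑(dirsIntoPattern (torLabel hm hn v)) := by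
  ext d
  simp [dominoPattern, dirsIntoPattern, torLabel_torVec, ← coe_triDirFinset]

theorem ncard_inter_torLattice_adj_dominoPattern (hm0 : m ≠ 0) (hn0 : n ≠ 0)
    (v : ZMod m × ZMod n) :
    {u | u ∈ dominoPattern hm hn ∧ (torLattice m n).Adj v u}.ncard
      = (dirsIntoPattern (torLabel hm hn v)).card := by
  have h3 {k : ℕ} (hk : 10 ∣ k) (hk0 : k ≠ 0) : 3 ≤ k := by
    have := Nat.le_of_dvd (Nat.pos_of_ne_zero hk0) hk
    omega
  rw [ncard_inter_torLattice_adj (h3 hm hm0) (h3 hn hn0), sep_triDirs_add_mem_dominoPattern,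
    ncard_coe_finset]

theorem isK2QPDS_dominoPattern (hm0 : m ≠ 0) (hn0 : n ≠ 0) :
    IsK2QPDS (torLattice m n) (dominoPattern hm hn) := by
  refine ⟨fun v hv => ?_, fun v hv => ?_⟩ <;>
    rw [ncard_inter_torLattice_adj_dominoPattern hm hn hm0 hn0]
  · exact card_dirsIntoPattern_of_not_mem _ hv
  · rcases dirsIntoPattern_of_mem _ hv with h | h <;> simp [h]

theorem torIsParallel_dominoPattern : TorIsParallel m n (dominoPattern hm hn) := by
  refine ⟨(1, 0), by simp [typeDirs], fun a ha b hb hab => ?_⟩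
  obtain ⟨-, d, hd, rfl⟩ := (torLattice_adj_iff a b).mp hab
  have hdS : d ∈ dirsIntoPattern (torLabel hm hn a) := by
    rw [← Finset.mem_coe, ← sep_triDirs_add_mem_dominoPattern]
    exact ⟨hd, hb⟩
  rw [add_sub_cancel_left]
  rcases dirsIntoPattern_of_mem _ ha with h | h <;>
    rw [h, Finset.mem_singleton] at hdS <;> subst hdS
  · exact .inl rfl
  · exact .inr (by simp [torVec])

end DominoPattern

/-- For all `k, ℓ ≥ 1`, the toroidal triangular lattice `Δ_{10k,10ℓ}` contains a
parallel `K₂`-QPDS with exactly `10kℓ` components, hence of cardinality `20kℓ`. -/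
theorem toroidal_parallel_K2_QPDS (k l : ℕ) (hk : 1 ≤ k) (hl : 1 ≤ l) :
    ∃ S : Set (ZMod (10 * k) × ZMod (10 * l)),
      IsK2QPDS (torLattice (10 * k) (10 * l)) S ∧
      TorIsParallel (10 * k) (10 * l) S ∧
      Nat.card ((torLattice (10 * k) (10 * l)).induce S).ConnectedComponent
        = 10 * k * l ∧
      S.ncard = 20 * k * l := by
  have hm : 10 ∣ 10 * k := dvd_mul_right 10 k
  have hn : 10 ∣ 10 * l := dvd_mul_right 10 l
  have : NeZero (10 * k) := ⟨by omega⟩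
  have : NeZero (10 * l) := ⟨by omega⟩
  have hK2 := isK2QPDS_dominoPattern hm hn (NeZero.ne _) (NeZero.ne _)
  have hcard : (dominoPattern hm hn).ncard = 20 * k * l := by
    linarith [five_mul_ncard_dominoPattern hm hn]
  refine ⟨dominoPattern hm hn, hK2, torIsParallel_dominoPattern hm hn, ?_, hcard⟩
  linarith [two_mul_card_connectedComponent_induce hK2.2]
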